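/- Assume 𝒢 is connected and let λ₁ = min_{f ∈ 𝒮_p} ℛ(f) be the first variational eigenvalue of ℋ_p. Then every eigenfunction of ℋ_p associated with λ₁ is either strictly positive at every vertex or strictly negative at every vertex, and λ₁ is simple: any two eigenfunctions of ℋ_p associated with λ₁ are scalar multiples of each other. -/

import Mathlib

/-!
An eigenfunction `f` of `λ₁` satisfies `energy f = λ₁ * mass f`, and `|f|` has no larger energy
and the same mass, so `|f|` also minimises `energy - λ₁ * mass`; differentiating along the
coordinate directions shows that `|f|` solves the eigenvalue equation. Strong comparison: if two
solutions satisfy `f ≤ g` and touch at a vertex, the equation there forces them to agree at its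
neighbours (`φ_p` is strictly increasing), hence everywhere on a connected graph. Comparing `|f|`
with `0` gives `|f| > 0`, and comparing any solution `g` with `c • |f|`, `c = min (g / |f|)`,
gives `g = c • |f|`. Applied to `g = f` this yields the sign of `f`, and any two eigenfunctions
are multiples of the same `|f|`.
-/

noncomputable section

open Finset

/-- `φ_p(x) = |x|^{p-2} x` (real exponent, `φ_p(0) = 0`). -/
def phiP (p x : ℝ) : ℝ := |x| ^ (p - 2) * x

/-- The generalized `p`-Laplacian `ℋ_p`.  The edge-weight function `ω` is assumed to be
symmetric and to vanish on pairs of non-adjacent vertices, so the sum over all vertices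
is the sum over the neighbours of `u`. -/
def genLap {V : Type*} [Fintype V] (ω : V → V → ℝ) (κ : V → ℝ) (p : ℝ)
    (f : V → ℝ) (u : V) : ℝ :=
  (∑ v : V, ω u v * phiP p (f u - f v)) + κ u * phiP p (f u)

/-- `(lam, f)` is an eigenpair of `ℋ_p`. -/
def IsEigenpair {V : Type*} [Fintype V] (ω : V → V → ℝ) (κ ϱ : V → ℝ) (p lam : ℝ)
    (f : V → ℝ) : Prop :=
  f ≠ 0 ∧ ∀ u, genLap ω κ p f u = lam * (ϱ u * phiP p (f u))

/-- The Rayleigh quotient `ℛ` of `ℋ_p` (each edge `uv` is counted once: the double sum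
counts it twice, whence the factor `1/2`). -/
def rayleigh {V : Type*} [Fintype V] (ω : V → V → ℝ) (κ ϱ : V → ℝ) (p : ℝ)
    (f : V → ℝ) : ℝ :=
  ((1 / 2) * ∑ u : V, ∑ v : V, ω u v * |f u - f v| ^ p + ∑ u : V, κ u * |f u| ^ p) /
    ∑ u : V, ϱ u * |f u| ^ p

/-- The `p`-sphere `𝒮_p`. -/
def pSphere (V : Type*) [Fintype V] (p : ℝ) : Set (V → ℝ) := {f | ∑ u : V, |f u| ^ p = 1}

/-- The Krasnoselskii genus of a (symmetric) subset of `ℝ^V`. -/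
def krasGenus {V : Type*} [Fintype V] (A : Set (V → ℝ)) : ℕ∞ :=
  sInf {n : ℕ∞ | ∃ k : ℕ, n = (k : ℕ∞) ∧ ∃ φ : (V → ℝ) → (Fin k → ℝ),
    ContinuousOn φ A ∧ (∀ x ∈ A, φ (-x) = -φ x) ∧ ∀ x ∈ A, φ x ≠ 0}

/-- The `k`-th variational eigenvalue of `ℋ_p`: the min over closed symmetric subsets of the
`p`-sphere of genus at least `k` of the max of the Rayleigh quotient. -/
def varEig {V : Type*} [Fintype V] (ω : V → V → ℝ) (κ ϱ : V → ℝ) (p : ℝ) (k : ℕ) : ℝ :=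
  sInf {r : ℝ | ∃ A : Set (V → ℝ), A ⊆ pSphere V p ∧ IsClosed A ∧ (∀ f ∈ A, -f ∈ A) ∧
    (k : ℕ∞) ≤ krasGenus A ∧ IsGreatest (rayleigh ω κ ϱ p '' A) r}

/-- The subgraph `𝒢₊(f)`: vertices where `f ≠ 0`, edges where `f` has equal nonzero signs. -/
def posGraph {V : Type*} (G : SimpleGraph V) (f : V → ℝ) : SimpleGraph V where
  Adj u v := G.Adj u v ∧ 0 < f u * f v
  symm := by
    refine ⟨fun u v h => ?_⟩
    exact ⟨h.1.symm, by rw [mul_comm]; exact h.2⟩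
  loopless := ⟨fun u h => G.loopless.irrefl u h.1⟩

/-- The number `ν(f)` of (strong) nodal domains of `f`: the number of connected components of
`𝒢₊(f)` consisting of vertices where `f` is nonzero. -/
def nodalCount {V : Type*} (G : SimpleGraph V) (f : V → ℝ) : ℕ :=
  {c : (posGraph G f).ConnectedComponent |
    ∀ u, (posGraph G f).connectedComponentMk u = c → f u ≠ 0}.ncard

/-- The subgraph of edges on which `f` changes sign. -/
def negGraph {V : Type*} (G : SimpleGraph V) (f : V → ℝ) : SimpleGraph V where
  Adj u v := G.Adj u v ∧ f u * f v < 0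
  symm := by
    refine ⟨fun u v h => ?_⟩
    exact ⟨h.1.symm, by rw [mul_comm]; exact h.2⟩
  loopless := ⟨fun u h => G.loopless.irrefl u h.1⟩

/-- `ζ(f)`: the number of edges on which `f` changes sign. -/
def zetaCount {V : Type*} [Fintype V] (G : SimpleGraph V) (f : V → ℝ) : ℕ :=
  (negGraph G f).edgeSet.ncard

/-- `z(f)`: the number of vertices where `f` vanishes. -/
def zeroCount {V : Type*} [Fintype V] (f : V → ℝ) : ℕ := {u : V | f u = 0}.ncard

/-- `l(f)`: the number of independent loops (cycle rank) of `𝒢₊(f)`,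
`|E(𝒢₊(f))| − |V(𝒢₊(f))| + ν(f)`. -/
def loopCount {V : Type*} [Fintype V] (G : SimpleGraph V) (f : V → ℝ) : ℤ :=
  ((posGraph G f).edgeSet.ncard : ℤ) - ({u : V | f u ≠ 0}.ncard : ℤ) + (nodalCount G f : ℤ)

/-- The subgraph `𝒢'(f)` of `𝒢` induced on the support of `f` (vertices with `f = 0` are
deleted together with all incident edges; in this encoding they are kept as isolated
vertices, which are discarded in the counts below). -/
def suppGraph {V : Type*} (G : SimpleGraph V) (f : V → ℝ) : SimpleGraph V where
  Adj u v := G.Adj u v ∧ f u ≠ 0 ∧ f v ≠ 0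
  symm := by
    refine ⟨fun u v h => ?_⟩
    exact ⟨h.1.symm, h.2.2, h.2.1⟩
  loopless := ⟨fun u h => G.loopless.irrefl u h.1⟩

/-- `c(f)`: the number of connected components of `𝒢'(f)`. -/
def compCount {V : Type*} (G : SimpleGraph V) (f : V → ℝ) : ℕ :=
  {c : (suppGraph G f).ConnectedComponent |
    ∀ u, (suppGraph G f).connectedComponentMk u = c → f u ≠ 0}.ncard

/-- `β'(f)`: the number of independent loops of `𝒢'(f)`,
`|E(𝒢'(f))| − |V(𝒢'(f))| + c(f)`. -/
def betaSupp {V : Type*} [Fintype V] (G : SimpleGraph V) (f : V → ℝ) : ℤ :=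
  ((suppGraph G f).edgeSet.ncard : ℤ) - ({u : V | f u ≠ 0}.ncard : ℤ) + (compCount G f : ℤ)


section Phi

variable {p : ℝ}

lemma phiP_neg (x : ℝ) : phiP p (-x) = -phiP p x := by
  simp [phiP]

lemma phiP_mul (x y : ℝ) : phiP p (x * y) = phiP p x * phiP p y := by
  simp only [phiP, abs_mul, Real.mul_rpow (abs_nonneg x) (abs_nonneg y)]
  ring

lemma phiP_of_nonneg (hp : 1 < p) {x : ℝ} (hx : 0 ≤ x) : phiP p x = x ^ (p - 1) := by
  rcases hx.eq_or_lt with rfl | hx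
  · simp [phiP, Real.zero_rpow (by linarith : p - 1 ≠ 0)]
  · rw [phiP, abs_of_pos hx, ← Real.rpow_add_one hx.ne']
    ring_nf

lemma phiP_strictMono (hp : 1 < p) : StrictMono (phiP p) :=
  strictMono_of_odd_strictMonoOn_nonneg phiP_neg fun x hx y hy hxy => by
    rw [phiP_of_nonneg hp hx, phiP_of_nonneg hp hy]
    exact Real.strictMonoOn_rpow_Ici_of_exponent_pos (by linarith) hx hy hxy

lemma phiP_mul_self (hp : 0 < p) (x : ℝ) : phiP p x * x = |x| ^ p := by
  rcases eq_or_ne x 0 with rfl | hx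
  · simp [phiP, Real.zero_rpow hp.ne']
  · have hx' : |x| ≠ 0 := abs_ne_zero.mpr hx
    rw [phiP, mul_assoc, ← abs_mul_abs_self, ← mul_assoc, ← Real.rpow_add_one hx',
      ← Real.rpow_add_one hx']
    ring_nf

lemma hasDerivAt_abs_add_mul_rpow (hp : 1 < p) (a b : ℝ) :
    HasDerivAt (fun t => |a + t * b| ^ p) (p * phiP p a * b) 0 := by
  have hline : HasDerivAt (fun t : ℝ => a + t * b) b 0 := by
    simpa using ((hasDerivAt_id (0 : ℝ)).mul_const b).const_add a
  rw [show p * phiP p a * b = p * |a| ^ (p - 2) * a * b by rw [phiP]; ring]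
  exact (hasDerivAt_abs_rpow a hp).comp_of_eq 0 hline (by simp)

end Phi

lemma add_smul_apply_sub {V : Type*} (f e : V → ℝ) (t : ℝ) (u v : V) :
    (f + t • e) u - (f + t • e) v = f u - f v + t * (e u - e v) := by
  simp only [Pi.add_apply, Pi.smul_apply, smul_eq_mul]
  ring

section Energy

variable {V : Type*} [Fintype V] {ω : V → V → ℝ} {κ ϱ : V → ℝ} {p : ℝ}

variable (ω κ p) in
def energy (f : V → ℝ) : ℝ :=
  (1 / 2) * ∑ u, ∑ v, ω u v * |f u - f v| ^ p + ∑ u, κ u * |f u| ^ p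

variable (ϱ p) in
def mass (f : V → ℝ) : ℝ := ∑ u, ϱ u * |f u| ^ p

variable (ω κ ϱ p) in
/-- `IsEigenpair` without `f ≠ 0`, so that solutions are closed under every scaling. -/
def IsEigenSolution (lam : ℝ) (f : V → ℝ) : Prop :=
  ∀ u, genLap ω κ p f u = lam * (ϱ u * phiP p (f u))

lemma rayleigh_eq_energy_div_mass (f : V → ℝ) :
    rayleigh ω κ ϱ p f = energy ω κ p f / mass ϱ p f := rfl

lemma sum_genLap_mul (hω : ∀ u v, ω u v = ω v u) (f e : V → ℝ) :
    ∑ u, genLap ω κ p f u * e u =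
      (1 / 2) * ∑ u, ∑ v, ω u v * phiP p (f u - f v) * (e u - e v) +
        ∑ u, κ u * phiP p (f u) * e u := by
  have hswap : ∑ u, ∑ v, ω u v * phiP p (f u - f v) * e v =
      -∑ u, ∑ v, ω u v * phiP p (f u - f v) * e u := by
    rw [Finset.sum_comm, ← Finset.sum_neg_distrib]
    refine Finset.sum_congr rfl fun u _ => ?_
    rw [← Finset.sum_neg_distrib]
    refine Finset.sum_congr rfl fun v _ => ?_
    rw [hω v u, ← neg_sub, phiP_neg]
    ring
  simp only [genLap, add_mul, Finset.sum_add_distrib, Finset.sum_mul, mul_sub,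
    Finset.sum_sub_distrib, hswap]
  ring

lemma sum_genLap_mul_self (hω : ∀ u v, ω u v = ω v u) (hp : 0 < p) (f : V → ℝ) :
    ∑ u, genLap ω κ p f u * f u = energy ω κ p f := by
  simp only [sum_genLap_mul hω, mul_assoc, phiP_mul_self hp, energy]

lemma IsEigenSolution.energy_eq (hω : ∀ u v, ω u v = ω v u) (hp : 0 < p) {lam : ℝ}
    {f : V → ℝ} (hf : IsEigenSolution ω κ ϱ p lam f) :
    energy ω κ p f = lam * mass ϱ p f := by
  rw [← sum_genLap_mul_self hω hp, mass, Finset.mul_sum]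
  refine Finset.sum_congr rfl fun u _ => ?_
  rw [hf u, mul_assoc, mul_assoc, phiP_mul_self hp]

lemma hasDerivAt_energy_add_smul (hω : ∀ u v, ω u v = ω v u) (hp : 1 < p) (f e : V → ℝ) :
    HasDerivAt (fun t : ℝ => energy ω κ p (f + t • e))
      (p * ∑ u, genLap ω κ p f u * e u) 0 := by
  have hedge : ∀ u v, HasDerivAt (fun t : ℝ => ω u v * |(f + t • e) u - (f + t • e) v| ^ p)
      (p * (ω u v * phiP p (f u - f v) * (e u - e v))) 0 := fun u v => by
    simpa only [add_smul_apply_sub, ← mul_assoc, mul_comm (ω u v) p] using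
      (hasDerivAt_abs_add_mul_rpow hp (f u - f v) (e u - e v)).const_mul (ω u v)
  have hvert : ∀ u, HasDerivAt (fun t : ℝ => κ u * |(f + t • e) u| ^ p)
      (p * (κ u * phiP p (f u) * e u)) 0 := fun u => by
    simpa only [Pi.add_apply, Pi.smul_apply, smul_eq_mul, ← mul_assoc, mul_comm (κ u) p] using
      (hasDerivAt_abs_add_mul_rpow hp (f u) (e u)).const_mul (κ u)
  refine (((HasDerivAt.fun_sum fun u _ => HasDerivAt.fun_sum fun v _ => hedge u v).const_mul
    (1 / 2)).fun_add (HasDerivAt.fun_sum fun u _ => hvert u)).congr_deriv ?_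
  rw [sum_genLap_mul hω]
  simp only [← Finset.mul_sum]
  ring

lemma hasDerivAt_mass_add_smul (hp : 1 < p) (f e : V → ℝ) :
    HasDerivAt (fun t : ℝ => mass ϱ p (f + t • e))
      (p * ∑ u, ϱ u * phiP p (f u) * e u) 0 := by
  have hvert : ∀ u, HasDerivAt (fun t : ℝ => ϱ u * |(f + t • e) u| ^ p)
      (p * (ϱ u * phiP p (f u) * e u)) 0 := fun u => by
    simpa only [Pi.add_apply, Pi.smul_apply, smul_eq_mul, ← mul_assoc, mul_comm (ϱ u) p] using
      (hasDerivAt_abs_add_mul_rpow hp (f u) (e u)).const_mul (ϱ u)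
  rw [Finset.mul_sum]
  exact HasDerivAt.fun_sum fun u _ => hvert u

lemma isEigenSolution_of_isMinOn (hω : ∀ u v, ω u v = ω v u) (hp : 1 < p) {lam : ℝ}
    {g : V → ℝ} (hmin : IsMinOn (fun h => energy ω κ p h - lam * mass ϱ p h) Set.univ g) :
    IsEigenSolution ω κ ϱ p lam g := by
  classical
  intro u
  have hderiv := (hasDerivAt_energy_add_smul (κ := κ) hω hp g (Pi.single u 1)).sub
    ((hasDerivAt_mass_add_smul (ϱ := ϱ) hp g (Pi.single u 1)).const_mul lam)
  have hlocal : IsLocalMin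
      (fun t : ℝ => energy ω κ p (g + t • Pi.single u 1) - lam * mass ϱ p (g + t • Pi.single u 1))
      0 :=
    Filter.Eventually.of_forall fun t => by
      simpa only [zero_smul, add_zero] using isMinOn_univ_iff.mp hmin (g + t • Pi.single u 1)
  have h0 := hlocal.hasDerivAt_eq_zero hderiv
  simp only [Pi.single_apply, mul_ite, mul_one, mul_zero, Finset.sum_ite_eq', Finset.mem_univ,
    if_true] at h0
  have hp0 : p ≠ 0 := by linarith
  apply mul_left_cancel₀ hp0
  linear_combination h0

end Energy

lemma SimpleGraph.Connected.forall_of_adj {V : Type*} {G : SimpleGraph V} (hG : G.Connected)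
    {P : V → Prop} (hP : ∀ u v, G.Adj u v → P u → P v) {u : V} (hu : P u) (v : V) : P v := by
  induction (SimpleGraph.reachable_iff_reflTransGen u v).mp (hG u v) with
  | refl => exact hu
  | tail _ hadj ih => exact hP _ _ hadj ih

section Homogeneity

variable {V : Type*} [Fintype V] {ω : V → V → ℝ} {κ ϱ : V → ℝ} {p : ℝ}

lemma abs_mul_rpow (c x : ℝ) : |c * x| ^ p = |c| ^ p * |x| ^ p := by
  rw [abs_mul, Real.mul_rpow (abs_nonneg c) (abs_nonneg x)]

lemma energy_smul (c : ℝ) (f : V → ℝ) :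
    energy ω κ p (c • f) = |c| ^ p * energy ω κ p f := by
  simp only [energy, Pi.smul_apply, smul_eq_mul, ← mul_sub, abs_mul_rpow,
    mul_left_comm _ (|c| ^ p), ← Finset.mul_sum]
  ring

lemma mass_smul (c : ℝ) (f : V → ℝ) : mass ϱ p (c • f) = |c| ^ p * mass ϱ p f := by
  simp only [mass, Pi.smul_apply, smul_eq_mul, abs_mul_rpow, mul_left_comm _ (|c| ^ p),
    ← Finset.mul_sum]

lemma rayleigh_smul {c : ℝ} (hc : c ≠ 0) (f : V → ℝ) :
    rayleigh ω κ ϱ p (c • f) = rayleigh ω κ ϱ p f := by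
  rw [rayleigh_eq_energy_div_mass, rayleigh_eq_energy_div_mass, energy_smul, mass_smul,
    mul_div_mul_left _ _ (Real.rpow_pos_of_pos (abs_pos.mpr hc) p).ne']

lemma mass_pos (hϱ : ∀ u, 0 < ϱ u) {f : V → ℝ} (hf : f ≠ 0) : 0 < mass ϱ p f := by
  obtain ⟨u, hu⟩ := Function.ne_iff.mp hf
  refine Finset.sum_pos' (fun v _ => mul_nonneg (hϱ v).le (by positivity))
    ⟨u, Finset.mem_univ u, mul_pos (hϱ u) (Real.rpow_pos_of_pos (abs_pos.mpr hu) p)⟩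

lemma pSphere_eq : pSphere V p = {f | mass 1 p f = 1} := by
  simp only [pSphere, mass, Pi.one_apply, one_mul]

lemma le_rayleigh_of_isLeast (hp : 0 < p) {lam : ℝ}
    (hlam : IsLeast (rayleigh ω κ ϱ p '' pSphere V p) lam) {f : V → ℝ} (hf : f ≠ 0) :
    lam ≤ rayleigh ω κ ϱ p f := by
  have hM : 0 < mass 1 p f := mass_pos (fun _ => one_pos) hf
  set c := mass 1 p f ^ (-p⁻¹)
  have hc : 0 < c := Real.rpow_pos_of_pos hM _
  have hsphere : c • f ∈ pSphere V p := by
    rw [pSphere_eq, Set.mem_ofPred_eq, mass_smul, abs_of_pos hc, ← Real.rpow_mul hM.le,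
      neg_mul, inv_mul_cancel₀ hp.ne', Real.rpow_neg_one, inv_mul_cancel₀ hM.ne']
  simpa only [rayleigh_smul hc.ne'] using hlam.2 ⟨c • f, hsphere, rfl⟩

lemma mul_mass_le_energy_of_isLeast (hp : 0 < p) (hϱ : ∀ u, 0 < ϱ u) {lam : ℝ}
    (hlam : IsLeast (rayleigh ω κ ϱ p '' pSphere V p) lam) (f : V → ℝ) :
    lam * mass ϱ p f ≤ energy ω κ p f := by
  rcases eq_or_ne f 0 with rfl | hf
  · simp [energy, mass, Real.zero_rpow hp.ne']
  · have := le_rayleigh_of_isLeast hp hlam hf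
    rwa [rayleigh_eq_energy_div_mass, le_div_iff₀ (mass_pos hϱ hf)] at this

end Homogeneity

section Comparison

variable {V : Type*} [Fintype V] {ω : V → V → ℝ} {κ ϱ : V → ℝ} {p lam : ℝ}

lemma genLap_smul (c : ℝ) (f : V → ℝ) (u : V) :
    genLap ω κ p (c • f) u = phiP p c * genLap ω κ p f u := by
  simp only [genLap, Pi.smul_apply, smul_eq_mul, ← mul_sub, phiP_mul, mul_add, Finset.mul_sum]
  congr 1
  · exact Finset.sum_congr rfl fun _ _ => by ring
  · ring

lemma IsEigenSolution.smul {f : V → ℝ} (hf : IsEigenSolution ω κ ϱ p lam f) (c : ℝ) :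
    IsEigenSolution ω κ ϱ p lam (c • f) := fun u => by
  rw [genLap_smul, hf u, Pi.smul_apply, smul_eq_mul, phiP_mul]
  ring

lemma eq_of_le_of_genLap_eq (hp : 1 < p) (hω : ∀ u v, 0 ≤ ω u v) {f g : V → ℝ} (hle : f ≤ g)
    {u v : V} (hu : f u = g u) (hlap : genLap ω κ p f u = genLap ω κ p g u) (huv : 0 < ω u v) :
    f v = g v := by
  have hterm : ∀ w ∈ Finset.univ, ω u w * phiP p (g u - g w) ≤ ω u w * phiP p (f u - f w) :=
    fun w _ => mul_le_mul_of_nonneg_left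
      ((phiP_strictMono hp).monotone (by linarith [hle w])) (hω u w)
  have hsum : ∑ w, ω u w * phiP p (g u - g w) = ∑ w, ω u w * phiP p (f u - f w) := by
    simpa only [genLap, hu, add_left_inj] using hlap.symm
  have hv := (Finset.sum_eq_sum_iff_of_le hterm).mp hsum v (Finset.mem_univ v)
  have := (phiP_strictMono hp).injective (mul_left_cancel₀ huv.ne' hv)
  linarith

variable {G : SimpleGraph V}

lemma IsEigenSolution.eq_of_le_of_eq (hG : G.Connected) (hp : 1 < p)
    (hω : ∀ u v, 0 ≤ ω u v) (hωG : ∀ u v, G.Adj u v → 0 < ω u v) {f g : V → ℝ}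
    (hf : IsEigenSolution ω κ ϱ p lam f) (hg : IsEigenSolution ω κ ϱ p lam g) (hle : f ≤ g)
    {u : V} (hu : f u = g u) : f = g :=
  funext <| hG.forall_of_adj (fun _ _ hadj hw =>
    eq_of_le_of_genLap_eq hp hω hle hw (by rw [hf, hg, hw]) (hωG _ _ hadj)) hu

lemma IsEigenSolution.pos_of_nonneg (hG : G.Connected) (hp : 1 < p)
    (hω : ∀ u v, 0 ≤ ω u v) (hωG : ∀ u v, G.Adj u v → 0 < ω u v) {f : V → ℝ}
    (hf : IsEigenSolution ω κ ϱ p lam f) (hf0 : 0 ≤ f) (hne : f ≠ 0) (u : V) : 0 < f u := by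
  refine (hf0 u).lt_of_ne fun hu => hne ?_
  have hzero : IsEigenSolution ω κ ϱ p lam 0 := by simpa using hf.smul 0
  exact (hzero.eq_of_le_of_eq hG hp hω hωG hf hf0 hu).symm

lemma IsEigenSolution.exists_eq_smul_of_pos (hG : G.Connected) (hp : 1 < p)
    (hω : ∀ u v, 0 ≤ ω u v) (hωG : ∀ u v, G.Adj u v → 0 < ω u v) {f g : V → ℝ}
    (hf : IsEigenSolution ω κ ϱ p lam f) (hfpos : ∀ u, 0 < f u)
    (hg : IsEigenSolution ω κ ϱ p lam g) : ∃ c : ℝ, g = c • f := by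
  have : Nonempty V := hG.nonempty
  obtain ⟨u, -, hu⟩ := Finset.exists_min_image Finset.univ (fun w => g w / f w)
    Finset.univ_nonempty
  refine ⟨g u / f u, ((hf.smul _).eq_of_le_of_eq hG hp hω hωG hg (u := u) (fun w => ?_) ?_).symm⟩
  · exact (le_div_iff₀ (hfpos w)).mp (hu w (Finset.mem_univ w))
  · exact div_mul_cancel₀ (g u) (hfpos u).ne'

end Comparison

section FirstEigenfunction

variable {V : Type*} [Fintype V] {ω : V → V → ℝ} {κ ϱ : V → ℝ} {p lam : ℝ}

lemma IsEigenpair.isEigenSolution {f : V → ℝ} (hf : IsEigenpair ω κ ϱ p lam f) :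
    IsEigenSolution ω κ ϱ p lam f :=
  hf.2

lemma energy_abs_le (hω : ∀ u v, 0 ≤ ω u v) (hp : 0 < p) (f : V → ℝ) :
    energy ω κ p |f| ≤ energy ω κ p f := by
  simp only [energy, Pi.abs_apply, abs_abs, add_le_add_iff_right]
  gcongr 1 / 2 * ∑ u, ∑ v, _ * ?_ ^ p with u _ v _
  · exact hω u v
  · exact abs_abs_sub_abs_le_abs_sub _ _

lemma mass_abs (f : V → ℝ) : mass ϱ p |f| = mass ϱ p f := by
  simp only [mass, Pi.abs_apply, abs_abs]

lemma IsEigenpair.abs_of_isLeast (hωs : ∀ u v, ω u v = ω v u) (hω : ∀ u v, 0 ≤ ω u v)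
    (hp : 1 < p) (hϱ : ∀ u, 0 < ϱ u) (hlam : IsLeast (rayleigh ω κ ϱ p '' pSphere V p) lam)
    {f : V → ℝ} (hf : IsEigenpair ω κ ϱ p lam f) : IsEigenpair ω κ ϱ p lam |f| := by
  have hp0 : 0 < p := zero_lt_one.trans hp
  refine ⟨mt (Pi.abs_eq_zero f).mp hf.1, isEigenSolution_of_isMinOn hωs hp ?_⟩
  refine isMinOn_univ_iff.mpr fun h => ?_
  have hf_energy : energy ω κ p f = lam * mass ϱ p f := hf.isEigenSolution.energy_eq hωs hp0
  rw [mass_abs]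
  linarith [mul_mass_le_energy_of_isLeast hp0 hϱ hlam h, energy_abs_le (κ := κ) hω hp0 f]

end FirstEigenfunction

/-- every eigenfunction of the first variational eigenvalue `λ₁` is strictly
positive everywhere or strictly negative everywhere, and `λ₁` is simple. -/
theorem stmt0 {V : Type*} [Fintype V]
    (G : SimpleGraph V) (ω : V → V → ℝ) (κ ϱ : V → ℝ) (p : ℝ) (hp : 1 < p)
    (hωsymm : ∀ u v, ω u v = ω v u)
    (hωpos : ∀ u v, G.Adj u v → 0 < ω u v)
    (hωzero : ∀ u v, ¬ G.Adj u v → ω u v = 0)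
    (hϱpos : ∀ u, 0 < ϱ u)
    (hconn : G.Connected)
    (lam1 : ℝ) (hlam1 : IsLeast (rayleigh ω κ ϱ p '' pSphere V p) lam1) :
    (∀ f : V → ℝ, IsEigenpair ω κ ϱ p lam1 f → (∀ u, 0 < f u) ∨ (∀ u, f u < 0)) ∧
    (∀ f g : V → ℝ, IsEigenpair ω κ ϱ p lam1 f → IsEigenpair ω κ ϱ p lam1 g →
      ∃ c : ℝ, g = c • f) := by
  have hω : ∀ u v, 0 ≤ ω u v := fun u v =>
    (em (G.Adj u v)).elim (fun h => (hωpos u v h).le) (fun h => (hωzero u v h).ge)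
  have hfirst : ∀ f, IsEigenpair ω κ ϱ p lam1 f → (∀ u, 0 < |f| u) ∧
      ∀ g, IsEigenpair ω κ ϱ p lam1 g → ∃ c : ℝ, c ≠ 0 ∧ g = c • |f| := fun f hf => by
    have habs := hf.abs_of_isLeast hωsymm hω hp hϱpos hlam1
    have hpos := habs.isEigenSolution.pos_of_nonneg hconn hp hω hωpos (abs_nonneg f) habs.1
    refine ⟨hpos, fun g hg => ?_⟩
    obtain ⟨c, hc⟩ :=
      habs.isEigenSolution.exists_eq_smul_of_pos hconn hp hω hωpos hpos hg.isEigenSolution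
    exact ⟨c, by rintro rfl; exact hg.1 (by simpa using hc), hc⟩
  refine ⟨fun f hf => ?_, fun f g hf hg => ?_⟩
  · obtain ⟨hpos, hmul⟩ := hfirst f hf
    obtain ⟨c, hc0, hc⟩ := hmul f hf
    rw [hc]
    simp only [Pi.smul_apply, smul_eq_mul]
    rcases hc0.lt_or_gt with hneg | hpos'
    · exact Or.inr fun u => mul_neg_of_neg_of_pos hneg (hpos u)
    · exact Or.inl fun u => mul_pos hpos' (hpos u)
  · obtain ⟨-, hmul⟩ := hfirst f hf
    obtain ⟨c, hc0, hc⟩ := hmul f hf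
    obtain ⟨d, -, hd⟩ := hmul g hg
    refine ⟨d / c, ?_⟩
    conv_rhs => rw [hc, smul_smul, div_mul_cancel₀ _ hc0]
    exact hd
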